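/- arXiv:1109.3641 — 2 statements merged into one kernel-verified Lean document; each statement's English description precedes it below -/
import Mathlib

section
/- The number of ascent sequences of length n avoiding the pattern 0112 is (3^{n-1}+1)/2; equivalently, 1 + sum over k from 1 to n-1 of binomial(n-1,k) * sum over i from 1 to k of binomial(k-1, k-i) equals (3^{n-1}+1)/2. Moreover, the 0112-avoiding ascent sequences are precisely those consisting of a strictly increasing sequence 0,1,...,k followed by a weakly decreasing sequence, the whole arbitrarily interspersed with 0's. -/
/-!
An ascent sequence starts with 0, so it contains 0112 exactly when its word of nonzero
letters contains a pattern `v v u` with `v < u`. Every ascent ends in a nonzero letter, so a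
new letter exceeds the number of nonzero letters before it by at most one; together with the
avoidance of `v v u` this forces the nonzero letters to read `1, 2, …, k` followed by a weakly
decreasing word bounded by `k`. Conversely, in such a sequence each letter of the initial run
exceeds everything before it and so creates an ascent, which makes it an ascent sequence.

For the count, choose the `m` positions of the nonzero letters among the last `n - 1`
(`(n-1).choose m` ways), the run length `k`, and the decreasing tail as a multiset of size
`m - k` from `{1, …, k}` (`(m-1).choose (m-k)` ways). The inner sums are `2 ^ (m - 1)`, and the
binomial theorem for `(2 + 1) ^ (n - 1)` gives `(3 ^ (n - 1) + 1) / 2`.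
-/

/-- Number of ascents (adjacent strict rises) in a list of naturals. -/
def ascList (l : List ℕ) : ℕ :=
  (l.zip l.tail).countP (fun p => decide (p.1 < p.2))

/-- `l` is an ascent sequence: nonempty, starts with 0, and each later letter is at most
one more than the number of ascents in the preceding prefix. -/
def IsAscSeq (l : List ℕ) : Prop :=
  l ≠ [] ∧ l.getD 0 0 = 0 ∧
    ∀ i, 0 < i → i < l.length → l.getD i 0 ≤ ascList (l.take i) + 1

/-- A sequence contains the pattern 0112. -/
def Contains0112 (l : List ℕ) : Prop :=
  ∃ i j k m, i < j ∧ j < k ∧ k < m ∧ m < l.length ∧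
    l.getD i 0 < l.getD j 0 ∧ l.getD j 0 = l.getD k 0 ∧ l.getD k 0 < l.getD m 0

theorem zip_tail_concat {α : Type*} : ∀ (l : List α) (h : l ≠ []) (y : α),
    (l ++ [y]).zip (l ++ [y]).tail = l.zip l.tail ++ [(l.getLast h, y)]
  | [a], _, y => rfl
  | a :: b :: t, _, y => by
    have := zip_tail_concat (b :: t) (List.cons_ne_nil b t) y
    simp only [List.cons_append, List.tail_cons, List.zip_cons_cons] at this ⊢
    simp [this, List.getLast_cons]

theorem ascList_concat {l : List ℕ} (hl : l ≠ []) (y : ℕ) :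
    ascList (l ++ [y]) = ascList l + if l.getLast hl < y then 1 else 0 := by
  simp [ascList, zip_tail_concat l hl y, List.countP_append]

theorem ascList_le_ascList_concat (l : List ℕ) (y : ℕ) : ascList l ≤ ascList (l ++ [y]) := by
  rcases eq_or_ne l [] with rfl | hl
  · simp [ascList]
  · rw [ascList_concat hl]; omega

theorem ascList_concat_of_forall_lt {l : List ℕ} {y : ℕ} (hl : l ≠ []) (hy : ∀ x ∈ l, x < y) :
    ascList (l ++ [y]) = ascList l + 1 := by
  rw [ascList_concat hl, if_pos (hy _ (List.getLast_mem hl))]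

theorem ascList_le_length_filter_ne_zero (l : List ℕ) :
    ascList l ≤ (l.filter (· ≠ 0)).length := by
  induction l using List.reverseRecOn with
  | nil => simp [ascList]
  | append_singleton l y ih =>
    rcases eq_or_ne l [] with rfl | hl
    · simp [ascList]
    rw [ascList_concat hl, List.filter_append, List.length_append]
    rcases eq_or_ne y 0 with rfl | hy
    · simpa [-decide_not] using ih
    · rw [List.filter_singleton, decide_eq_true hy, cond_true, List.length_singleton]
      split_ifs <;> omega

theorem isAscSeq_singleton_iff (y : ℕ) : IsAscSeq [y] ↔ y = 0 := by
  simp [IsAscSeq]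
  omega

theorem isAscSeq_concat_iff {l : List ℕ} (hl : l ≠ []) (y : ℕ) :
    IsAscSeq (l ++ [y]) ↔ IsAscSeq l ∧ y ≤ ascList l + 1 := by
  have hlen : 0 < l.length := List.length_pos_iff.2 hl
  simp only [IsAscSeq, List.getD_append l [y] 0 0 hlen, ne_eq, List.append_eq_nil_iff, hl,
    false_and, not_false_eq_true, true_and, List.length_append, List.length_singleton]
  constructor
  · rintro ⟨h0, hasc⟩
    refine ⟨⟨h0, fun i hi hil => ?_⟩, ?_⟩
    · simpa [List.getElem?_append_left hil, List.take_append_of_le_length hil.le]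
        using hasc i hi (by omega)
    · simpa using hasc l.length hlen (by omega)
  · rintro ⟨⟨h0, hasc⟩, hy⟩
    refine ⟨h0, fun i hi hil => ?_⟩
    rcases Nat.lt_or_eq_of_le (Nat.lt_succ_iff.1 hil) with hil | rfl
    · simpa [List.getElem?_append_left hil, List.take_append_of_le_length hil.le]
        using hasc i hi hil
    · simpa using hy

theorem IsAscSeq.exists_eq_zero_cons {l : List ℕ} (h : IsAscSeq l) : ∃ t, l = 0 :: t := by
  obtain ⟨hne, h0, -⟩ := h
  obtain ⟨a, t, rfl⟩ := List.exists_cons_of_ne_nil hne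
  exact ⟨t, by simpa using h0⟩

theorem contains0112_iff_sublist (l : List ℕ) :
    Contains0112 l ↔ ∃ a b c, a < b ∧ b < c ∧ [a, b, b, c].Sublist l := by
  constructor
  · rintro ⟨i, j, k, m, hij, hjk, hkm, hm, hab, hbb, hbc⟩
    have hsub := List.map_getElem_sublist (l := l)
      (is := [⟨i, by omega⟩, ⟨j, by omega⟩, ⟨k, by omega⟩, ⟨m, hm⟩]) (by simp; omega)
    simp only [List.getD_eq_getElem _ _ (by omega : i < l.length),
      List.getD_eq_getElem _ _ (by omega : j < l.length),
      List.getD_eq_getElem _ _ (by omega : k < l.length), List.getD_eq_getElem _ _ hm]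
      at hab hbb hbc
    exact ⟨_, _, _, hab, hbb ▸ hbc, by simpa [hbb] using hsub⟩
  · rintro ⟨a, b, c, hab, hbc, hsub⟩
    obtain ⟨f, hf⟩ := List.sublist_iff_exists_fin_orderEmbedding_get_eq.1 hsub
    have hval : ∀ i, l.getD (f i) 0 = [a, b, b, c].get i := fun i => by
      rw [hf i, List.getD_eq_getElem _ _ (f i).isLt, List.get_eq_getElem]
    have hlt : ∀ i j : Fin 4, i.val < j.val → f i < f j := fun i j h => f.strictMono h
    refine ⟨f 0, f 1, f 2, f 3, hlt 0 1 (by simp), hlt 1 2 (by simp), hlt 2 3 (by simp),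
      (f 3).isLt, ?_⟩
    simp only [hval]
    exact ⟨hab, rfl, hbc⟩

def Contains112 (w : List ℕ) : Prop :=
  ∃ v u, v < u ∧ [v, v, u].Sublist w

theorem Contains112.mono {w w' : List ℕ} (h : Contains112 w) (hw : w.Sublist w') :
    Contains112 w' :=
  let ⟨v, u, hvu, hsub⟩ := h
  ⟨v, u, hvu, hsub.trans hw⟩

theorem contains0112_zero_cons_iff (t : List ℕ) :
    Contains0112 (0 :: t) ↔ Contains112 (t.filter (· ≠ 0)) := by
  rw [contains0112_iff_sublist]
  constructor
  · rintro ⟨a, b, c, hab, hbc, hsub⟩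
    have hbbc : [b, b, c].Sublist t := by
      rcases List.sublist_cons_iff.1 hsub with hsub | ⟨r, hr, hsub⟩
      · exact (List.sublist_cons_self a _).trans hsub
      · cases hr; exact hsub
    refine ⟨b, c, hbc, ?_⟩
    simpa [show b ≠ 0 by omega, show c ≠ 0 by omega] using hbbc.filter (· ≠ 0)
  · rintro ⟨v, u, hvu, hsub⟩
    have hv : v ≠ 0 := by simpa using (List.mem_filter.1 (hsub.subset (by simp))).2
    exact ⟨0, v, u, Nat.pos_of_ne_zero hv, hvu, (hsub.trans List.filter_sublist).cons_cons 0⟩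

def IsRunThenDecreasing (k : ℕ) (w : List ℕ) : Prop :=
  ∃ d, w = List.range' 1 k ++ d ∧ d.Pairwise (· ≥ ·) ∧ ∀ x ∈ d, x ≤ k

namespace IsRunThenDecreasing

variable {k y : ℕ} {w : List ℕ}

theorem le (h : IsRunThenDecreasing k w) : ∀ x ∈ w, x ≤ k := by
  obtain ⟨d, rfl, -, hd⟩ := h
  intro x hx
  rcases List.mem_append.1 hx with hx | hx
  · rw [List.mem_range'_1] at hx; omega
  · exact hd x hx

theorem unique {k' : ℕ} (h : IsRunThenDecreasing k w) (h' : IsRunThenDecreasing k' w) :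
    k = k' := by
  have key : ∀ {k k'}, IsRunThenDecreasing k w → IsRunThenDecreasing k' w → k ≤ k' := by
    rintro k k' ⟨d, rfl, -⟩ h'
    rcases Nat.eq_zero_or_pos k with rfl | hk
    · exact Nat.zero_le _
    · exact h'.le k (List.mem_append_left _ (List.mem_range'_1.2 ⟨hk, by omega⟩))
  exact le_antisymm (key h h') (key h' h)

theorem not_contains112 (h : IsRunThenDecreasing k w) : ¬Contains112 w := by
  obtain ⟨d, rfl, hd, -⟩ := h
  rintro ⟨v, u, hvu, hsub⟩
  obtain ⟨r₁, r₂, hr, h₁, h₂⟩ := List.sublist_append_iff.1 hsub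
  rcases r₁ with _ | ⟨x, _ | ⟨x', r₁⟩⟩
  · obtain rfl : [v, v, u] = r₂ := hr
    have := hd.sublist h₂; simp at this; omega
  · obtain ⟨rfl, rfl⟩ : v = x ∧ [v, u] = r₂ := by simpa using hr
    have := hd.sublist h₂; simp at this; omega
  · obtain ⟨rfl, rfl, -⟩ : v = x ∧ v = x' ∧ _ := by simpa using hr
    have := (List.pairwise_lt_range' (s := 1) (n := k)).sublist h₁
    simp at this

theorem exists_concat (h : IsRunThenDecreasing k w) (hw : 0 ∉ w) (hy : y ≤ w.length + 1)
    (hfree : ¬Contains112 (w ++ [y])) : ∃ k', IsRunThenDecreasing k' (w ++ [y]) := by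
  obtain ⟨d, rfl, hd, hdk⟩ := h
  rcases d.eq_nil_or_concat' with rfl | ⟨d, v, rfl⟩
  · simp only [List.append_nil, List.length_range'] at hy ⊢
    rcases Nat.lt_or_eq_of_le hy with hy | rfl
    · exact ⟨k, [y], rfl, by simp, by simp; omega⟩
    · exact ⟨k + 1, [], by simp [List.range'_concat, Nat.add_comm], by simp, by simp⟩
  have hv : 0 < v := Nat.pos_of_ne_zero fun hv => hw (by simp [hv])
  have hvk : v ≤ k := hdk v (by simp)
  -- `v` also occurs in the run, so `y > v` would create the pattern `v v y`.
  have hyv : y ≤ v := by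
    by_contra! hvy
    refine hfree ⟨v, y, hvy, ?_⟩
    have hrun : [v].Sublist (List.range' 1 k) := by simp [List.mem_range'_1]; omega
    simpa using (hrun.append (List.singleton_sublist.2 (by simp : v ∈ d ++ [v]))).append
      (List.Sublist.refl [y])
  refine ⟨k, d ++ [v] ++ [y], by simp, List.pairwise_append.2 ⟨hd, by simp, ?_⟩, ?_⟩
  · intro a ha b hb
    obtain rfl := List.mem_singleton.1 hb
    rcases List.mem_append.1 ha with ha | ha
    · exact le_trans hyv ((List.pairwise_append.1 hd).2.2 a ha v (by simp))
    · simp_all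
  · intro x hx
    rcases List.mem_append.1 hx with hx | hx
    · exact hdk x hx
    · simp at hx; omega

theorem of_concat (h : IsRunThenDecreasing k (w ++ [y])) :
    (∃ k', k = k' + 1 ∧ y = k' + 1 ∧ w = List.range' 1 k') ∨
      (y ≤ k ∧ IsRunThenDecreasing k w) := by
  obtain ⟨d, he, hd, hdk⟩ := h
  rcases d.eq_nil_or_concat' with rfl | ⟨d, v, rfl⟩
  · rcases k with _ | k
    · simp at he
    · rw [List.append_nil, List.range'_concat] at he
      obtain ⟨rfl, hy⟩ := List.append_inj' he rfl
      exact Or.inl ⟨k, rfl, by simp at hy; omega, rfl⟩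
  · rw [← List.append_assoc] at he
    obtain ⟨rfl, hy⟩ := List.append_inj' he rfl
    obtain rfl := List.singleton_inj.1 hy
    exact Or.inr ⟨hdk y (by simp), d, rfl, hd.sublist (by simp),
      fun x hx => hdk x (by simp [hx])⟩

end IsRunThenDecreasing

theorem exists_isRunThenDecreasing_of_isAscSeq {l : List ℕ} (hl : IsAscSeq l)
    (hfree : ¬Contains112 (l.filter (· ≠ 0))) :
    ∃ k, IsRunThenDecreasing k (l.filter (· ≠ 0)) := by
  induction l using List.reverseRecOn with
  | nil => exact absurd rfl hl.1
  | append_singleton l y ih =>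
    rcases eq_or_ne l [] with rfl | hne
    · obtain rfl := (isAscSeq_singleton_iff y).1 hl
      exact ⟨0, [], by simp, by simp, by simp⟩
    obtain ⟨hl, hy⟩ := (isAscSeq_concat_iff hne y).1 hl
    rw [List.filter_append] at hfree ⊢
    obtain ⟨k, hk⟩ := ih hl fun h => hfree (h.mono (List.sublist_append_left _ _))
    rcases eq_or_ne y 0 with rfl | hy0
    · exact ⟨k, by simpa using hk⟩
    · simp only [List.filter_singleton, decide_eq_true hy0, cond_true] at hfree ⊢
      exact hk.exists_concat (by simp) (by have := ascList_le_length_filter_ne_zero l; omega)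
        hfree

theorem isAscSeq_zero_cons_of_isRunThenDecreasing {t : List ℕ} {k : ℕ}
    (h : IsRunThenDecreasing k (t.filter (· ≠ 0))) : IsAscSeq (0 :: t) ∧ k ≤ ascList (0 :: t) := by
  induction t using List.reverseRecOn generalizing k with
  | nil =>
    obtain ⟨d, he, -⟩ := h
    obtain ⟨hk, -⟩ := List.append_eq_nil_iff.1 he.symm
    simp_all [isAscSeq_singleton_iff]
  | append_singleton t y ih =>
    rw [← List.cons_append]
    rcases eq_or_ne y 0 with rfl | hy0
    · obtain ⟨hasc, hk⟩ := ih (by simpa using h)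
      exact ⟨(isAscSeq_concat_iff (by simp) 0).2 ⟨hasc, by omega⟩,
        hk.trans (ascList_le_ascList_concat _ _)⟩
    rw [List.filter_append, List.filter_singleton, decide_eq_true hy0, cond_true] at h
    rcases h.of_concat with ⟨k, rfl, rfl, ht⟩ | ⟨hyk, ht⟩
    · obtain ⟨hasc, hk⟩ := ih (k := k) ⟨[], by rw [ht, List.append_nil], by simp, by simp⟩
      have hlt : ∀ x ∈ 0 :: t, x < k + 1 := by
        intro x hx
        rcases List.mem_cons.1 hx with rfl | hx
        · omega
        rcases eq_or_ne x 0 with rfl | hx0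
        · omega
        · have : x ∈ List.range' 1 k := ht ▸ List.mem_filter.2 ⟨hx, by simpa⟩
          rw [List.mem_range'_1] at this; omega
      rw [isAscSeq_concat_iff (by simp), ascList_concat_of_forall_lt (by simp) hlt]
      exact ⟨⟨hasc, by omega⟩, by omega⟩
    · obtain ⟨hasc, hk⟩ := ih ht
      exact ⟨(isAscSeq_concat_iff (by simp) y).2 ⟨hasc, by omega⟩,
        hk.trans (ascList_le_ascList_concat _ _)⟩

theorem not_contains0112_iff {l : List ℕ} (hl : IsAscSeq l) :
    ¬Contains0112 l ↔ ∃ k, IsRunThenDecreasing k (l.filter (· ≠ 0)) := by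
  obtain ⟨t, rfl⟩ := hl.exists_eq_zero_cons
  have hfilter : (0 :: t).filter (· ≠ 0) = t.filter (· ≠ 0) := by simp
  rw [contains0112_zero_cons_iff, hfilter]
  refine ⟨fun hfree => hfilter ▸ exists_isRunThenDecreasing_of_isAscSeq hl (hfilter ▸ hfree),
    fun ⟨k, hk⟩ => hk.not_contains112⟩

theorem isAscSeq_and_not_contains0112_iff (l : List ℕ) :
    IsAscSeq l ∧ ¬Contains0112 l ↔
      ∃ t, l = 0 :: t ∧ ∃ k, IsRunThenDecreasing k (t.filter (· ≠ 0)) := by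
  constructor
  · rintro ⟨hl, hfree⟩
    obtain ⟨t, rfl⟩ := hl.exists_eq_zero_cons
    exact ⟨t, rfl, by simpa using (not_contains0112_iff hl).1 hfree⟩
  · rintro ⟨t, rfl, k, hk⟩
    have hl := (isAscSeq_zero_cons_of_isRunThenDecreasing hk).1
    exact ⟨hl, (not_contains0112_iff hl).2 ⟨k, by simpa using hk⟩⟩

open Finset

theorem Finset.card_sym {α : Type*} [DecidableEq α] (s : Finset α) (n : ℕ) :
    #(s.sym n) = (#s).multichoose n := by
  conv_lhs => rw [← Finset.attach_map_val (s := s), Finset.sym_map, Finset.card_map,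
    ← Finset.univ_eq_attach, Finset.sym_univ, Finset.card_univ,
    Sym.card_sym_eq_multichoose, Fintype.card_coe]

def decreasingLists (k L : ℕ) : Finset (List ℕ) :=
  ((Finset.Icc 1 k).sym L).image fun s : Sym ℕ L => (s : Multiset ℕ).sort (· ≥ ·)

theorem mem_decreasingLists {k L : ℕ} {d : List ℕ} :
    d ∈ decreasingLists k L ↔ d.length = L ∧ d.Pairwise (· ≥ ·) ∧ ∀ x ∈ d, 1 ≤ x ∧ x ≤ k := by
  simp only [decreasingLists, Finset.mem_image, Finset.mem_sym_iff, Finset.mem_Icc]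
  constructor
  · rintro ⟨s, hs, rfl⟩
    exact ⟨by simp, Multiset.pairwise_sort _ _, fun x hx => hs x (by simpa using hx)⟩
  · rintro ⟨hlen, hd, hbound⟩
    refine ⟨⟨d, by simpa using hlen⟩, fun x hx => hbound x hx, ?_⟩
    simpa using List.mergeSort_eq_self (· ≥ ·) hd

theorem card_decreasingLists (k L : ℕ) : #(decreasingLists k L) = k.multichoose L := by
  rw [decreasingLists, Finset.card_image_of_injective, Finset.card_sym, Nat.card_Icc,
    Nat.add_sub_cancel]
  intro s s' h
  exact Sym.coe_injective (by simpa using congrArg ((↑) : List ℕ → Multiset ℕ) h)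

def runThenDecreasingWords (m : ℕ) : Finset (List ℕ) :=
  (Icc 0 m).biUnion fun k => (decreasingLists k (m - k)).image (List.range' 1 k ++ ·)

theorem mem_runThenDecreasingWords {m : ℕ} {w : List ℕ} :
    w ∈ runThenDecreasingWords m ↔ w.length = m ∧ 0 ∉ w ∧ ∃ k, IsRunThenDecreasing k w := by
  simp only [runThenDecreasingWords, mem_biUnion, mem_Icc, mem_image, mem_decreasingLists]
  constructor
  · rintro ⟨k, ⟨-, hkm⟩, d, ⟨hlen, hd, hbound⟩, rfl⟩
    refine ⟨by simp; omega, fun h0 => ?_, k, d, rfl, hd, fun x hx => (hbound x hx).2⟩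
    rcases List.mem_append.1 h0 with h0 | h0
    · simp [List.mem_range'_1] at h0
    · exact absurd (hbound 0 h0).1 (by omega)
  · rintro ⟨rfl, h0, k, d, rfl, hd, hbound⟩
    refine ⟨k, ⟨Nat.zero_le k, by simp⟩, d, ⟨by simp, hd, fun x hx => ⟨?_, hbound x hx⟩⟩, rfl⟩
    exact Nat.pos_of_ne_zero fun hx0 => h0 (by simp [← hx0, hx])

theorem card_runThenDecreasingWords (m : ℕ) :
    #(runThenDecreasingWords m) = ∑ k ∈ Icc 0 m, (m - 1).choose (m - k) := by
  rw [runThenDecreasingWords, card_biUnion]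
  · refine sum_congr rfl fun k hk => ?_
    rw [card_image_of_injective _ (List.append_right_injective _), card_decreasingLists,
      Nat.multichoose_eq]
    congr 1
    simp at hk; omega
  · intro k _ k' _ hkk'
    refine disjoint_left.2 fun w hw hw' => hkk' ?_
    simp only [mem_image, mem_decreasingLists] at hw hw'
    obtain ⟨d, ⟨-, hd, hbound⟩, rfl⟩ := hw
    obtain ⟨d', ⟨-, hd', hbound'⟩, he⟩ := hw'
    exact IsRunThenDecreasing.unique ⟨d, rfl, hd, fun x hx => (hbound x hx).2⟩
      ⟨d', he.symm, hd', fun x hx => (hbound' x hx).2⟩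

def padZeros : ℕ → List ℕ → Finset (List ℕ)
  | 0, [] => {[]}
  | 0, _ :: _ => ∅
  | N + 1, [] => (padZeros N []).image (0 :: ·)
  | N + 1, x :: w => (padZeros N (x :: w)).image (0 :: ·) ∪ (padZeros N w).image (x :: ·)

theorem cons_mem_image_cons {α : Type*} [DecidableEq α] {S : Finset (List α)} {a b : α}
    {t : List α} :
    a :: t ∈ S.image (b :: ·) ↔ b = a ∧ t ∈ S := by
  simp [and_comm]

theorem mem_padZeros {N : ℕ} {w t : List ℕ} (hw : 0 ∉ w) :
    t ∈ padZeros N w ↔ t.length = N ∧ t.filter (· ≠ 0) = w := by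
  induction N generalizing w t with
  | zero => cases w <;> cases t <;> simp [padZeros]
  | succ N ih =>
    obtain _ | ⟨a, t⟩ := t
    · cases w <;> simp [padZeros]
    obtain _ | ⟨x, w⟩ := w
    · rw [padZeros, cons_mem_image_cons, ih hw, List.filter_cons]
      rcases eq_or_ne a 0 with rfl | ha
      · simp
      · simp [ha, Ne.symm ha]
    · have hx : x ≠ 0 := fun h => hw (by simp [h])
      rw [padZeros, mem_union, cons_mem_image_cons, cons_mem_image_cons, ih hw,
        ih fun h => hw (by simp [h]), List.filter_cons]
      rcases eq_or_ne a 0 with rfl | ha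
      · simp [hx]
      · simp [ha, Ne.symm ha]
        tauto

theorem card_padZeros (N : ℕ) {w : List ℕ} (hw : 0 ∉ w) :
    #(padZeros N w) = N.choose w.length := by
  induction N generalizing w with
  | zero => cases w <;> simp [padZeros]
  | succ N ih =>
    obtain _ | ⟨x, w⟩ := w
    · simp [padZeros, card_image_of_injective _ (List.cons_injective), ih hw]
    · have hx : x ≠ 0 := fun h => hw (by simp [h])
      have hdisj :
          Disjoint ((padZeros N (x :: w)).image (0 :: ·)) ((padZeros N w).image (x :: ·)) :=
        disjoint_left.2 fun t h h' => by
          obtain ⟨_, -, rfl⟩ := mem_image.1 h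
          exact hx (cons_mem_image_cons.1 h').1
      rw [padZeros, card_union_of_disjoint hdisj, card_image_of_injective _ List.cons_injective,
        card_image_of_injective _ List.cons_injective, ih hw, ih fun h => hw (by simp [h]),
        List.length_cons, Nat.choose_succ_succ', Nat.add_comm]

theorem card_biUnion_padZeros (N : ℕ) (W : Finset (List ℕ)) (hW : ∀ w ∈ W, 0 ∉ w) :
    #(W.biUnion (padZeros N)) = ∑ w ∈ W, N.choose w.length := by
  rw [card_biUnion]
  · exact sum_congr rfl fun w hw => card_padZeros N (hW w hw)
  · intro w hw w' hw' hne
    refine disjoint_left.2 fun t h h' => hne ?_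
    rw [← ((mem_padZeros (hW w hw)).1 h).2, ← ((mem_padZeros (hW w' hw')).1 h').2]

theorem sum_Icc_choose_sub {m : ℕ} (hm : 1 ≤ m) :
    ∑ k ∈ Icc 1 m, (m - 1).choose (m - k) = 2 ^ (m - 1) := by
  obtain ⟨j, rfl⟩ : ∃ j, m = j + 1 := ⟨m - 1, by omega⟩
  rw [Nat.add_sub_cancel, ← Nat.sum_range_choose j]
  refine sum_nbij' (fun k => j + 1 - k) (fun i => j + 1 - i) ?_ ?_ ?_ ?_ ?_ <;>
    intro k hk <;> simp at hk ⊢ <;> omega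

theorem card_runThenDecreasingWords_of_pos {m : ℕ} (hm : 1 ≤ m) :
    #(runThenDecreasingWords m) = ∑ k ∈ Icc 1 m, (m - 1).choose (m - k) := by
  rw [card_runThenDecreasingWords, ← add_sum_Ioc_eq_sum_Icc (Nat.zero_le m),
    ← Icc_add_one_left_eq_Ioc, Nat.choose_eq_zero_of_lt (by omega), zero_add, zero_add]

theorem three_pow_add_one (N : ℕ) :
    3 ^ N + 1 = 2 * (1 + ∑ k ∈ Icc 1 N, N.choose k * 2 ^ (k - 1)) := by
  have hbinom : 3 ^ N = ∑ k ∈ Icc 0 N, N.choose k * 2 ^ k := by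
    rw [← Nat.range_succ_eq_Icc_zero, show 3 = 2 + 1 from rfl, add_pow]
    simp [mul_comm]
  rw [hbinom, ← add_sum_Ioc_eq_sum_Icc (Nat.zero_le N), ← Icc_add_one_left_eq_Ioc, mul_add,
    mul_sum]
  have : ∀ k ∈ Icc 1 N, 2 * (N.choose k * 2 ^ (k - 1)) = N.choose k * 2 ^ k := by
    intro k hk
    obtain ⟨j, rfl⟩ : ∃ j, k = j + 1 := ⟨k - 1, by simp at hk; omega⟩
    rw [Nat.add_sub_cancel, pow_succ]; ring
  rw [sum_congr rfl this]
  simp; ring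

theorem one_add_sum_choose_mul_sum_choose (N : ℕ) :
    1 + ∑ k ∈ Icc 1 N, N.choose k * ∑ i ∈ Icc 1 k, (k - 1).choose (k - i) = (3 ^ N + 1) / 2 := by
  rw [sum_congr rfl fun k hk => by rw [sum_Icc_choose_sub (mem_Icc.1 hk).1], three_pow_add_one,
    Nat.mul_div_cancel_left _ two_pos]

theorem sum_choose_length_runThenDecreasingWords (N : ℕ) :
    ∑ w ∈ (Icc 0 N).biUnion runThenDecreasingWords, N.choose w.length =
      1 + ∑ m ∈ Icc 1 N, N.choose m * ∑ k ∈ Icc 1 m, (m - 1).choose (m - k) := by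
  rw [sum_biUnion]
  · have hlen : ∀ m, ∑ w ∈ runThenDecreasingWords m, N.choose w.length =
        N.choose m * #(runThenDecreasingWords m) := fun m => by
      rw [sum_congr rfl fun w hw => by rw [(mem_runThenDecreasingWords.1 hw).1], sum_const,
        smul_eq_mul, mul_comm]
    simp only [hlen]
    rw [← add_sum_Ioc_eq_sum_Icc (Nat.zero_le N), ← Icc_add_one_left_eq_Ioc, zero_add,
      sum_congr rfl fun m hm => by rw [card_runThenDecreasingWords_of_pos (mem_Icc.1 hm).1]]
    simp [card_runThenDecreasingWords]
  · intro m _ m' _ hne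
    refine disjoint_left.2 fun w hw hw' => hne ?_
    rw [← (mem_runThenDecreasingWords.1 hw).1, ← (mem_runThenDecreasingWords.1 hw').1]

def avoidingAscSeqs (n : ℕ) : Finset (List ℕ) :=
  (((Icc 0 (n - 1)).biUnion runThenDecreasingWords).biUnion (padZeros (n - 1))).image (0 :: ·)

theorem coe_avoidingAscSeqs {n : ℕ} (hn : 1 ≤ n) :
    (avoidingAscSeqs n : Set (List ℕ)) =
      {l : List ℕ | l.length = n ∧ IsAscSeq l ∧ ¬Contains0112 l} := by
  ext l
  simp only [avoidingAscSeqs, Set.mem_ofPred_eq, isAscSeq_and_not_contains0112_iff, coe_image,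
    Set.mem_image, mem_coe, mem_biUnion, mem_Icc]
  constructor
  · rintro ⟨t, ⟨w, ⟨m, -, hw⟩, ht⟩, rfl⟩
    obtain ⟨-, h0, k, hk⟩ := mem_runThenDecreasingWords.1 hw
    obtain ⟨htlen, rfl⟩ := (mem_padZeros h0).1 ht
    exact ⟨by simp; omega, t, rfl, k, hk⟩
  · rintro ⟨hlen, t, rfl, k, hk⟩
    have h0 : 0 ∉ t.filter (· ≠ 0) := by simp
    have hle := (List.filter_sublist (p := (· ≠ 0)) (l := t)).length_le
    simp only [List.length_cons] at hlen
    exact ⟨t, ⟨_, ⟨_, ⟨Nat.zero_le _, by omega⟩, mem_runThenDecreasingWords.2 ⟨rfl, h0, k, hk⟩⟩,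
      (mem_padZeros h0).2 ⟨by omega, rfl⟩⟩, rfl⟩

theorem card_avoidingAscSeqs (n : ℕ) :
    #(avoidingAscSeqs n) = 1 + ∑ m ∈ Icc 1 (n - 1),
      (n - 1).choose m * ∑ k ∈ Icc 1 m, (m - 1).choose (m - k) := by
  rw [avoidingAscSeqs, card_image_of_injective _ List.cons_injective,
    card_biUnion_padZeros _ _ fun w hw => ?_, sum_choose_length_runThenDecreasingWords]
  obtain ⟨m, -, hw⟩ := mem_biUnion.1 hw
  exact (mem_runThenDecreasingWords.1 hw).2.1

/-- The 0112-avoiding ascent sequences of length `n` number `(3^(n-1)+1)/2`; the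
corresponding binomial-sum identity holds; and these sequences are precisely the
strictly increasing sequence `0,1,…,k` followed by a weakly decreasing sequence with
letters at most `k`, arbitrarily interspersed with 0's (i.e., the nonzero letters form
`1,…,k` followed by a weakly decreasing word of letters in `{1,…,k}`). -/
theorem stmt18 (n : ℕ) (hn : 1 ≤ n) :
    {l : List ℕ | l.length = n ∧ IsAscSeq l ∧ ¬ Contains0112 l}.ncard
        = (3 ^ (n - 1) + 1) / 2 ∧
    1 + ∑ k ∈ Finset.Icc 1 (n - 1), (n - 1).choose k *
        ∑ i ∈ Finset.Icc 1 k, (k - 1).choose (k - i)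
      = (3 ^ (n - 1) + 1) / 2 ∧
    (∀ l : List ℕ, IsAscSeq l →
      (¬ Contains0112 l ↔ ∃ k d, l.filter (fun x => decide (x ≠ 0))
          = (List.range k).map (· + 1) ++ d ∧
        d.Pairwise (· ≥ ·) ∧ ∀ x ∈ d, x ≤ k)) := by
  refine ⟨?_, one_add_sum_choose_mul_sum_choose (n - 1), fun l hl => ?_⟩
  · rw [← coe_avoidingAscSeqs hn, Set.ncard_coe_finset, card_avoidingAscSeqs,
      one_add_sum_choose_mul_sum_choose]
  · have hrun : ∀ k, (List.range k).map (· + 1) = List.range' 1 k := fun k => by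
      simp [List.range'_eq_map_range, Nat.add_comm]
    simp only [hrun]
    exact not_contains0112_iff hl
end

section
/- There is an ascent-preserving bijection between the set of restricted ascent sequences of length n and the set of ascent sequences of length n avoiding the pattern 021; consequently the number of ascent sequences of length n avoiding 021 equals the n-th Catalan number. -/
/-- A sequence contains the pattern 021. -/
def Contains021 (l : List ℕ) : Prop :=
  ∃ i j k, i < j ∧ j < k ∧ k < l.length ∧
    l.getD i 0 < l.getD k 0 ∧ l.getD k 0 < l.getD j 0

/-- A restricted ascent sequence: an ascent sequence in which each letter is at least
one less than the maximum of the preceding letters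
(stated subtraction-free as `x_j ≤ x_i + 1` for all `j < i`). -/
def IsRestrictedAscSeq (l : List ℕ) : Prop :=
  IsAscSeq l ∧ ∀ i, 0 < i → i < l.length → ∀ j < i, l.getD j 0 ≤ l.getD i 0 + 1

/-!
Call a letter *low* if it is smaller than the maximum `M` of the letters before it. In a
restricted ascent sequence every low letter equals `M - 1`; in a 021-avoiding ascent sequence
every low letter equals `0`, since a nonzero low letter forms a 021 with the initial `0` and the
larger letter before it. Replacing each low letter `M - 1` by `0`, and back, is therefore a
bijection, and it preserves ascents because the letter preceding a low letter is `M - 1` or `M`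
in the first case and `0` or `M` in the second.

For the count, a 021-avoiding ascent sequence grows by appending `0` or a letter in
`[max M 1, asc + 1]`. The number of ways to append `d` letters depends only on the slack
`asc - M` and on whether the last letter is `0` or `M`, and these counts satisfy a linear system
of recursions which is solved by explicit power series in the Catalan series `C`
(`topSeries`, `bottomSeries`); for the one-letter start `[0]` the count is then read off from
`C = 1 + X C + X² C³`.
-/

namespace AscentSequence

open List

def maxLetter (l : List ℕ) : ℕ := l.foldr max 0

@[simp] lemma maxLetter_nil : maxLetter [] = 0 := rfl

@[simp] lemma maxLetter_concat (l : List ℕ) (y : ℕ) :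
    maxLetter (l ++ [y]) = max (maxLetter l) y := by
  induction l with
  | nil => simp [maxLetter]
  | cons a l ih => simp only [maxLetter, cons_append, foldr_cons] at ih ⊢; rw [ih, max_assoc]

lemma maxLetter_le_iff {l : List ℕ} {c : ℕ} : maxLetter l ≤ c ↔ ∀ x ∈ l, x ≤ c := by
  induction l with
  | nil => simp
  | cons a l ih => simp [maxLetter, ← ih]

lemma getLastD_le_maxLetter (l : List ℕ) : l.getLastD 0 ≤ maxLetter l := by
  rcases l.eq_nil_or_concat' with rfl | ⟨l, y, rfl⟩ <;> simp

lemma ascList_cons_cons (a b : ℕ) (t : List ℕ) :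
    ascList (a :: b :: t) = ascList (b :: t) + if a < b then 1 else 0 := by
  simp [ascList, List.countP_cons]

lemma ascList_concat {l : List ℕ} (hl : l ≠ []) (y : ℕ) :
    ascList (l ++ [y]) = ascList l + if l.getLastD 0 < y then 1 else 0 := by
  induction l with
  | nil => exact absurd rfl hl
  | cons a t ih =>
    cases t with
    | nil => simp [ascList]
    | cons b t =>
      simp only [cons_append] at ih ⊢
      rw [ascList_cons_cons, ih (cons_ne_nil _ _), ascList_cons_cons]
      simp only [getLastD_cons]
      omega

lemma isAscSeq_singleton {y : ℕ} : IsAscSeq [y] ↔ y = 0 := by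
  refine ⟨fun h => by simpa using h.2.1, fun hy => ⟨cons_ne_nil _ _, by simp [hy], ?_⟩⟩
  intro i hi hi'
  simp at hi'
  omega

lemma isAscSeq_concat {l : List ℕ} (hl : l ≠ []) (y : ℕ) :
    IsAscSeq (l ++ [y]) ↔ IsAscSeq l ∧ y ≤ ascList l + 1 := by
  have hlen : 0 < l.length := length_pos_iff.mpr hl
  have htake : ∀ i ≤ l.length, (l ++ [y]).take i = l.take i :=
    fun i hi => take_append_of_le_length hi
  have hlast : (l ++ [y]).getD l.length 0 = y := by simp
  constructor
  · rintro ⟨-, h0, hasc⟩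
    rw [getD_append _ _ _ _ hlen] at h0
    refine ⟨⟨hl, h0, fun i hi0 hi => ?_⟩, ?_⟩
    · have := hasc i hi0 (by simp; omega)
      rwa [getD_append _ _ _ _ hi, htake i hi.le] at this
    · have := hasc l.length hlen (by simp)
      rwa [hlast, htake _ le_rfl, take_length] at this
  · rintro ⟨⟨-, h0, hasc⟩, hy⟩
    refine ⟨by simp, by rwa [getD_append _ _ _ _ hlen], fun i hi0 hi => ?_⟩
    simp only [length_append, length_singleton] at hi
    rcases Nat.lt_or_ge i l.length with hi | hi
    · rw [getD_append _ _ _ _ hi, htake i hi.le]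
      exact hasc i hi0 hi
    · obtain rfl : i = l.length := by omega
      rwa [hlast, htake _ le_rfl, take_length]

lemma maxLetter_le_ascList {l : List ℕ} (h : IsAscSeq l) : maxLetter l ≤ ascList l := by
  induction l using List.reverseRecOn with
  | nil => simp
  | append_singleton l y ih =>
    rcases eq_or_ne l [] with rfl | hl
    · simp [isAscSeq_singleton.mp h, maxLetter]
    obtain ⟨hl', hy⟩ := (isAscSeq_concat hl y).mp h
    have := getLastD_le_maxLetter l
    rw [maxLetter_concat, ascList_concat hl]
    have := ih hl'
    split_ifs <;> omega

lemma isRestrictedAscSeq_iff {l : List ℕ} :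
    IsRestrictedAscSeq l ↔ IsAscSeq l ∧ l.Pairwise (fun a b => a ≤ b + 1) := by
  rw [IsRestrictedAscSeq, pairwise_iff_getElem]
  refine and_congr_right fun _ => ⟨fun h j i hj hi hji => ?_, fun h i _ hi j hji => ?_⟩
  · simpa [getD_eq_getElem, hi, hj] using h i (by omega) hi j hji
  · simpa [getD_eq_getElem, hi, hji.trans hi] using h j i (hji.trans hi) hi hji

lemma not_contains021_iff {l : List ℕ} (h0 : l.getD 0 0 = 0) :
    ¬ Contains021 l ↔ l.Pairwise (fun a b => b = 0 ∨ a ≤ b) := by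
  rw [pairwise_iff_getElem]
  constructor
  · intro h j k hj hk hjk
    by_contra! hbad
    have hj0 : 0 < j := Nat.pos_of_ne_zero fun hj0 => by subst hj0; simp_all
    exact h ⟨0, j, k, hj0, hjk, hk, by simp_all; omega, by simp_all⟩
  · rintro h ⟨i, j, k, hij, hjk, hk, hik, hkj⟩
    have := h j k (hjk.trans hk) hk hjk
    simp only [getD_eq_getElem _ _ hk, getD_eq_getElem _ _ (hjk.trans hk)] at hik hkj
    omega

def IsAscSeqAvoiding021 (l : List ℕ) : Prop :=
  IsAscSeq l ∧ l.Pairwise (fun a b => b = 0 ∨ a ≤ b)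

lemma isAscSeqAvoiding021_iff {l : List ℕ} :
    IsAscSeqAvoiding021 l ↔ IsAscSeq l ∧ ¬ Contains021 l :=
  ⟨fun h => ⟨h.1, (not_contains021_iff h.1.2.1).mpr h.2⟩,
    fun h => ⟨h.1, (not_contains021_iff h.1.2.1).mp h.2⟩⟩

lemma isRestrictedAscSeq_concat {l : List ℕ} (hl : l ≠ []) (y : ℕ) :
    IsRestrictedAscSeq (l ++ [y]) ↔
      IsRestrictedAscSeq l ∧ y ≤ ascList l + 1 ∧ maxLetter l ≤ y + 1 := by
  simp only [isRestrictedAscSeq_iff, isAscSeq_concat hl, pairwise_append, pairwise_singleton,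
    mem_singleton, forall_eq, true_and, maxLetter_le_iff]
  tauto

lemma isAscSeqAvoiding021_concat {l : List ℕ} (hl : l ≠ []) (y : ℕ) :
    IsAscSeqAvoiding021 (l ++ [y]) ↔
      IsAscSeqAvoiding021 l ∧ y ≤ ascList l + 1 ∧ (y = 0 ∨ maxLetter l ≤ y) := by
  have hy : (∀ a ∈ l, y = 0 ∨ a ≤ y) ↔ y = 0 ∨ maxLetter l ≤ y := by
    rw [maxLetter_le_iff]
    by_cases y = 0 <;> simp [*]
  simp only [IsAscSeqAvoiding021, isAscSeq_concat hl, pairwise_append, pairwise_singleton,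
    mem_singleton, forall_eq, true_and, hy]
  tauto

lemma isRestrictedAscSeq_singleton {y : ℕ} : IsRestrictedAscSeq [y] ↔ y = 0 := by
  simp [isRestrictedAscSeq_iff, isAscSeq_singleton]

lemma isAscSeqAvoiding021_singleton {y : ℕ} : IsAscSeqAvoiding021 [y] ↔ y = 0 := by
  simp [IsAscSeqAvoiding021, isAscSeq_singleton]

lemma maxLetter_le_add_one_of_prefix {l xs : List ℕ} {y : ℕ} (h : IsRestrictedAscSeq l)
    (hp : xs ++ [y] <+: l) : maxLetter xs ≤ y + 1 := by
  have := (isRestrictedAscSeq_iff.mp h).2.sublist hp.sublist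
  simpa [maxLetter_le_iff] using (pairwise_append.mp this).2.2

lemma eq_zero_or_maxLetter_le_of_prefix {l xs : List ℕ} {y : ℕ} (h : IsAscSeqAvoiding021 l)
    (hp : xs ++ [y] <+: l) : y = 0 ∨ maxLetter xs ≤ y := by
  have := h.2.sublist hp.sublist
  rw [maxLetter_le_iff]
  by_cases y = 0 <;> simp_all [pairwise_append]

lemma maxLetter_le_getLastD_add_one {l : List ℕ} (h : IsRestrictedAscSeq l) :
    maxLetter l ≤ l.getLastD 0 + 1 := by
  rcases l.eq_nil_or_concat' with rfl | ⟨l, y, rfl⟩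
  · simp
  · simpa using maxLetter_le_add_one_of_prefix h prefix_rfl

lemma getLastD_eq_zero_or_maxLetter {l : List ℕ} (h : IsAscSeqAvoiding021 l) :
    l.getLastD 0 = 0 ∨ l.getLastD 0 = maxLetter l := by
  rcases l.eq_nil_or_concat' with rfl | ⟨l, y, rfl⟩
  · simp
  · rcases eq_zero_or_maxLetter_le_of_prefix h prefix_rfl with hy | hy <;> simp [hy]

/-- Read `l` from left to right and replace every letter that is smaller than the maximum `m`
of the letters before it by `c m`. -/
def relabelFrom (c : ℕ → ℕ) : ℕ → List ℕ → List ℕ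
  | _, [] => []
  | m, x :: xs => (if x < m then c m else x) :: relabelFrom c (max m x) xs

def relabel (c : ℕ → ℕ) (l : List ℕ) : List ℕ := relabelFrom c 0 l

section Relabel

variable (c : ℕ → ℕ)

@[simp] lemma relabel_nil : relabel c [] = [] := rfl

lemma relabelFrom_concat (m : ℕ) (l : List ℕ) (y : ℕ) :
    relabelFrom c m (l ++ [y]) = relabelFrom c m l ++
      [if y < max m (maxLetter l) then c (max m (maxLetter l)) else y] := by
  induction l generalizing m with
  | nil => simp [relabelFrom]
  | cons x l ih => simp [relabelFrom, ih, maxLetter, max_assoc]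

@[simp] lemma relabel_concat (l : List ℕ) (y : ℕ) :
    relabel c (l ++ [y]) =
      relabel c l ++ [if y < maxLetter l then c (maxLetter l) else y] := by
  simp [relabel, relabelFrom_concat]

@[simp] lemma length_relabel (l : List ℕ) : (relabel c l).length = l.length := by
  induction l using List.reverseRecOn <;> simp [*]

lemma relabel_ne_nil {l : List ℕ} (hl : l ≠ []) : relabel c l ≠ [] := by
  simpa [← length_pos_iff] using hl

lemma getLastD_relabel (l : List ℕ) : (relabel c l).getLastD 0 =
    if l.getLastD 0 < maxLetter l then c (maxLetter l) else l.getLastD 0 := by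
  rcases l.eq_nil_or_concat' with rfl | ⟨l, y, rfl⟩
  · simp
  · rcases lt_or_ge y (maxLetter l) with hy | hy
    · simp [hy, max_eq_left hy.le]
    · simp [hy.not_gt, max_eq_right hy]

variable {c}

lemma maxLetter_relabel (hc : ∀ m, 0 < m → c m < m) (l : List ℕ) :
    maxLetter (relabel c l) = maxLetter l := by
  induction l using List.reverseRecOn with
  | nil => rfl
  | append_singleton l y ih =>
    rw [relabel_concat, maxLetter_concat, maxLetter_concat, ih]
    split_ifs with hy
    · have := hc (maxLetter l) (by omega)
      omega
    · rfl

lemma relabel_relabel {c' : ℕ → ℕ} (hc : ∀ m, 0 < m → c m < m) {l : List ℕ}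
    (hl : ∀ xs y, xs ++ [y] <+: l → y < maxLetter xs → y = c' (maxLetter xs)) :
    relabel c' (relabel c l) = l := by
  induction l using List.reverseRecOn with
  | nil => rfl
  | append_singleton l y ih =>
    rw [relabel_concat, relabel_concat, maxLetter_relabel hc,
      ih fun xs z h => hl xs z (h.trans (prefix_append l [y]))]
    have hy := hl l y prefix_rfl
    by_cases h1 : y < maxLetter l
    · simp [h1, hc (maxLetter l) (by omega), ← hy h1]
    · simp [h1]

end Relabel

@[simp] lemma relabel_singleton (c : ℕ → ℕ) (y : ℕ) : relabel c [y] = [y] := by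
  simp [relabel, relabelFrom]

lemma ascList_relabel_zero {l : List ℕ} (h : IsRestrictedAscSeq l) :
    ascList (relabel (fun _ => 0) l) = ascList l := by
  induction l using List.reverseRecOn with
  | nil => rfl
  | append_singleton l y ih =>
    rcases eq_or_ne l [] with rfl | hl
    · simp
    obtain ⟨hl', -, hy⟩ := (isRestrictedAscSeq_concat hl y).mp h
    have h1 := maxLetter_le_getLastD_add_one hl'
    have h2 := getLastD_le_maxLetter l
    rw [relabel_concat, ascList_concat (relabel_ne_nil _ hl), ascList_concat hl, ih hl',
      getLastD_relabel]
    split_ifs <;> omega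

lemma ascList_relabel_pred {l : List ℕ} (h : IsAscSeqAvoiding021 l) :
    ascList (relabel (· - 1) l) = ascList l := by
  induction l using List.reverseRecOn with
  | nil => rfl
  | append_singleton l y ih =>
    rcases eq_or_ne l [] with rfl | hl
    · simp
    obtain ⟨hl', -, hy⟩ := (isAscSeqAvoiding021_concat hl y).mp h
    have h1 := getLastD_eq_zero_or_maxLetter hl'
    rw [relabel_concat, ascList_concat (relabel_ne_nil _ hl), ascList_concat hl, ih hl',
      getLastD_relabel]
    split_ifs <;> omega

lemma isAscSeqAvoiding021_relabel_zero {l : List ℕ} (h : IsRestrictedAscSeq l) :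
    IsAscSeqAvoiding021 (relabel (fun _ => 0) l) := by
  induction l using List.reverseRecOn with
  | nil => exact absurd rfl h.1.1
  | append_singleton l y ih =>
    rcases eq_or_ne l [] with rfl | hl
    · simpa [isAscSeqAvoiding021_singleton, isRestrictedAscSeq_singleton] using h
    obtain ⟨hl', hasc, hy⟩ := (isRestrictedAscSeq_concat hl y).mp h
    rw [relabel_concat, isAscSeqAvoiding021_concat (relabel_ne_nil _ hl),
      ascList_relabel_zero hl', maxLetter_relabel (fun _ h => h)]
    refine ⟨ih hl', ?_, ?_⟩ <;> split_ifs <;> omega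

lemma isRestrictedAscSeq_relabel_pred {l : List ℕ} (h : IsAscSeqAvoiding021 l) :
    IsRestrictedAscSeq (relabel (· - 1) l) := by
  induction l using List.reverseRecOn with
  | nil => exact absurd rfl h.1.1
  | append_singleton l y ih =>
    rcases eq_or_ne l [] with rfl | hl
    · simpa [isAscSeqAvoiding021_singleton, isRestrictedAscSeq_singleton] using h
    obtain ⟨hl', hasc, hy⟩ := (isAscSeqAvoiding021_concat hl y).mp h
    have := maxLetter_le_ascList hl'.1
    rw [relabel_concat, isRestrictedAscSeq_concat (relabel_ne_nil _ hl),
      ascList_relabel_pred hl', maxLetter_relabel (fun _ h => by omega)]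
    refine ⟨ih hl', ?_, ?_⟩ <;> split_ifs <;> omega

lemma relabel_pred_relabel_zero {l : List ℕ} (h : IsRestrictedAscSeq l) :
    relabel (· - 1) (relabel (fun _ => 0) l) = l :=
  relabel_relabel (fun _ h => h) fun _ _ hp hy => by
    have := maxLetter_le_add_one_of_prefix h hp
    omega

lemma relabel_zero_relabel_pred {l : List ℕ} (h : IsAscSeqAvoiding021 l) :
    relabel (fun _ => 0) (relabel (· - 1) l) = l :=
  relabel_relabel (fun _ h => by omega) fun _ _ hp hy => by
    have := eq_zero_or_maxLetter_le_of_prefix h hp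
    omega

def restrictedEquivAvoiding021 (n : ℕ) :
    {l : List ℕ // l.length = n ∧ IsRestrictedAscSeq l} ≃
      {l : List ℕ // l.length = n ∧ IsAscSeq l ∧ ¬ Contains021 l} where
  toFun l := ⟨relabel (fun _ => 0) l, by simpa using l.2.1,
    isAscSeqAvoiding021_iff.mp (isAscSeqAvoiding021_relabel_zero l.2.2)⟩
  invFun l := ⟨relabel (· - 1) l, by simpa using l.2.1,
    isRestrictedAscSeq_relabel_pred (isAscSeqAvoiding021_iff.mpr l.2.2)⟩
  left_inv l := Subtype.ext (relabel_pred_relabel_zero l.2.2)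
  right_inv l := Subtype.ext (relabel_zero_relabel_pred (isAscSeqAvoiding021_iff.mpr l.2.2))

lemma ascList_restrictedEquivAvoiding021 {n : ℕ}
    (l : {l : List ℕ // l.length = n ∧ IsRestrictedAscSeq l}) :
    ascList (restrictedEquivAvoiding021 n l : List ℕ) = ascList l :=
  ascList_relabel_zero l.2.2

lemma isAscSeqAvoiding021_of_append {l : List ℕ} (hl : l ≠ []) (r : List ℕ)
    (h : IsAscSeqAvoiding021 (l ++ r)) : IsAscSeqAvoiding021 l := by
  induction r using List.reverseRecOn with
  | nil => simpa using h
  | append_singleton r y ih =>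
    rw [← append_assoc, isAscSeqAvoiding021_concat (by simp [hl])] at h
    exact ih h.1

def nextLetters (m a : ℕ) : Finset ℕ := insert 0 (Finset.Icc (max m 1) (a + 1))

lemma mem_nextLetters_iff {l : List ℕ} (hl : IsAscSeqAvoiding021 l) (y : ℕ) :
    y ∈ nextLetters (maxLetter l) (ascList l) ↔ IsAscSeqAvoiding021 (l ++ [y]) := by
  have := maxLetter_le_ascList hl.1
  rw [isAscSeqAvoiding021_concat hl.1.1, nextLetters, Finset.mem_insert, Finset.mem_Icc]
  simp only [hl, true_and]
  omega

def extensions : ℕ → List ℕ → Finset (List ℕ)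
  | 0, l => {l}
  | d + 1, l => (nextLetters (maxLetter l) (ascList l)).biUnion fun y => extensions d (l ++ [y])

lemma mem_extensions {l : List ℕ} (hl : IsAscSeqAvoiding021 l) (d : ℕ) (x : List ℕ) :
    x ∈ extensions d l ↔ IsAscSeqAvoiding021 x ∧ x.length = l.length + d ∧ l <+: x := by
  induction d generalizing l x with
  | zero =>
    simp only [extensions, Finset.mem_singleton, add_zero]
    exact ⟨by rintro rfl; exact ⟨hl, rfl, prefix_rfl⟩,
      fun ⟨_, hlen, hp⟩ => (hp.eq_of_length hlen.symm).symm⟩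
  | succ d ih =>
    simp only [extensions, Finset.mem_biUnion]
    constructor
    · rintro ⟨y, hy, hx⟩
      obtain ⟨hx, hlen, hp⟩ := (ih ((mem_nextLetters_iff hl y).mp hy) x).mp hx
      exact ⟨hx, by simp at hlen; omega, (prefix_append l [y]).trans hp⟩
    · rintro ⟨hx, hlen, r, rfl⟩
      obtain _ | ⟨y, r⟩ := r
      · simp at hlen
      rw [show l ++ y :: r = l ++ [y] ++ r by simp] at hx ⊢
      have hly := isAscSeqAvoiding021_of_append (by simp) r hx
      refine ⟨y, (mem_nextLetters_iff hl y).mpr hly, (ih hly _).mpr ⟨hx, ?_, prefix_append _ _⟩⟩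
      simp at hlen ⊢
      omega

/-- The number of ways to append `d` letters to a 021-avoiding ascent sequence whose maximum,
number of ascents and last letter are `m`, `a` and `t`. -/
def numExtensions : ℕ → ℕ → ℕ → ℕ → ℕ
  | 0, _, _, _ => 1
  | d + 1, m, a, t =>
    ∑ y ∈ nextLetters m a, numExtensions d (max m y) (a + if t < y then 1 else 0) y

lemma card_extensions {l : List ℕ} (hl : IsAscSeqAvoiding021 l) (d : ℕ) :
    (extensions d l).card = numExtensions d (maxLetter l) (ascList l) (l.getLastD 0) := by
  induction d generalizing l with
  | zero => rfl
  | succ d ih =>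
    rw [extensions, numExtensions, Finset.card_biUnion]
    · refine Finset.sum_congr rfl fun y hy => ?_
      rw [ih ((mem_nextLetters_iff hl y).mp hy), maxLetter_concat, ascList_concat hl.1.1,
        getLastD_concat]
    · intro y₁ hy₁ y₂ hy₂ hne
      refine Finset.disjoint_left.mpr fun x hx₁ hx₂ => hne ?_
      obtain ⟨-, -, r₁, rfl⟩ := (mem_extensions ((mem_nextLetters_iff hl y₁).mp hy₁) d x).mp hx₁
      obtain ⟨-, -, r₂, h⟩ := (mem_extensions ((mem_nextLetters_iff hl y₂).mp hy₂) d _).mp hx₂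
      simp only [append_assoc, singleton_append, append_cancel_left_eq, cons.injEq] at h
      exact h.1.symm

lemma numExtensions_succ {d m a t : ℕ} (hm : 1 ≤ m) (ht : t ≤ m) (hma : m ≤ a + 1) :
    numExtensions (d + 1) m a t = numExtensions d m a 0 +
      numExtensions d m (a + if t < m then 1 else 0) m +
      ∑ y ∈ Finset.Ioc m (a + 1), numExtensions d y (a + 1) y := by
  have h0 : 0 ∉ Finset.Icc m (a + 1) := by simp; omega
  rw [numExtensions, nextLetters, max_eq_left hm, Finset.sum_insert h0,
    ← Finset.Ioc_insert_left hma, Finset.sum_insert Finset.left_notMem_Ioc, add_assoc]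
  congr 2
  · simp
  · simp
  · refine Finset.sum_congr rfl fun y hy => ?_
    rw [Finset.mem_Ioc] at hy
    rw [max_eq_right (by omega), if_pos (by omega)]

lemma numExtensions_succ_zero_zero_zero (d : ℕ) :
    numExtensions (d + 1) 0 0 0 = numExtensions d 0 0 0 + numExtensions d 1 1 1 := by
  simp [numExtensions, nextLetters]

lemma sum_Ioc_sub {M : Type*} [AddCommMonoid M] (f : ℕ → M) (m b : ℕ) :
    ∑ y ∈ Finset.Ioc m b, f (b - y) = ∑ j ∈ Finset.range (b - m), f j := by
  refine Finset.sum_nbij' (b - ·) (b - ·) ?_ ?_ ?_ ?_ fun _ _ => rfl <;>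
    intro y hy <;> simp only [Finset.mem_Ioc, Finset.mem_range] at hy ⊢ <;> omega

open PowerSeries

noncomputable def catalanSeriesInt : PowerSeries ℤ :=
  PowerSeries.map (Nat.castRingHom ℤ) catalanSeries

local notation "𝒞" => catalanSeriesInt

@[simp] lemma coeff_catalanSeriesInt (n : ℕ) : coeff n 𝒞 = catalan n := by
  simp [catalanSeriesInt, catalanSeries_coeff]

@[simp] lemma constantCoeff_catalanSeriesInt : constantCoeff 𝒞 = 1 := by
  rw [← coeff_zero_eq_constantCoeff_apply, coeff_catalanSeriesInt, catalan_zero, Nat.cast_one]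

lemma catalanSeriesInt_eq : 𝒞 = 1 + X * 𝒞 ^ 2 := by
  have := congrArg (PowerSeries.map (Nat.castRingHom ℤ)) catalanSeries_sq_mul_X_add_one
  simp only [map_add, map_mul, map_pow, map_X, map_one] at this
  rw [catalanSeriesInt]
  linear_combination -this

lemma coeff_succ_one_add_X_mul (d : ℕ) (f : PowerSeries ℤ) :
    coeff (d + 1) (1 + X * f) = coeff d f := by
  rw [map_add, coeff_one, if_neg d.succ_ne_zero, zero_add, coeff_succ_X_mul]

/-- Solution of the recursions `topSeries_eq`, `bottomSeries_eq`, which are those satisfied by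
the extension counts (`numExtensions_succ`). -/
noncomputable def topSeries (g : ℕ) : PowerSeries ℤ := 𝒞 ^ 3 * (1 + X * 𝒞 ^ 3) ^ g

noncomputable def bottomSeries (g : ℕ) : PowerSeries ℤ := (1 + X ^ 2 * 𝒞 ^ 3) * topSeries g

lemma X_mul_sum_range_topSeries (g : ℕ) :
    X * ∑ j ∈ Finset.range (g + 1), topSeries j = (1 + X * 𝒞 ^ 3) ^ (g + 1) - 1 := by
  rw [← geom_sum_mul, Finset.mul_sum, Finset.sum_mul]
  exact Finset.sum_congr rfl fun j _ => by rw [topSeries]; ring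

lemma catalanSeriesInt_cube : 𝒞 ^ 3 = 1 + 3 * X * 𝒞 ^ 3 + X ^ 3 * 𝒞 ^ 6 := by
  linear_combination (X ^ 2 * 𝒞 ^ 4 + X * 𝒞 ^ 3 - X * 𝒞 ^ 2 + 𝒞 ^ 2 + 𝒞 + 1) * catalanSeriesInt_eq

lemma topSeries_eq (g : ℕ) : topSeries g =
    1 + X * (bottomSeries g + topSeries g + ∑ j ∈ Finset.range (g + 1), topSeries j) := by
  rw [mul_add, mul_add, X_mul_sum_range_topSeries, bottomSeries, topSeries, pow_succ]
  linear_combination (1 + X * 𝒞 ^ 3) ^ g * catalanSeriesInt_cube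

lemma bottomSeries_eq (g : ℕ) : bottomSeries g =
    1 + X * (bottomSeries g + topSeries (g + 1) + ∑ j ∈ Finset.range (g + 1), topSeries j) := by
  rw [mul_add, mul_add, X_mul_sum_range_topSeries, bottomSeries, topSeries, topSeries, pow_succ]
  linear_combination (1 + X * 𝒞 ^ 3) ^ g * catalanSeriesInt_cube

lemma numExtensions_eq_coeff (d : ℕ) {m a : ℕ} (hm : 1 ≤ m) (hma : m ≤ a) :
    (numExtensions d m a m : ℤ) = coeff d (topSeries (a - m)) ∧
      (numExtensions d m a 0 : ℤ) = coeff d (bottomSeries (a - m)) := by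
  induction d generalizing m a with
  | zero => simp [numExtensions, topSeries, bottomSeries]
  | succ d ih =>
    have hsum : ∑ y ∈ Finset.Ioc m (a + 1), (numExtensions d y (a + 1) y : ℤ) =
        ∑ j ∈ Finset.range (a - m + 1), coeff d (topSeries j) := by
      rw [show a - m + 1 = a + 1 - m by omega, ← sum_Ioc_sub]
      refine Finset.sum_congr rfl fun y hy => ?_
      rw [Finset.mem_Ioc] at hy
      exact (ih (by omega) (by omega)).1
    refine ⟨?_, ?_⟩
    · rw [numExtensions_succ hm le_rfl (by omega), topSeries_eq, coeff_succ_one_add_X_mul]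
      push_cast
      simp only [lt_irrefl, if_false, add_zero, map_add, map_sum, hsum, (ih hm hma).1,
        (ih hm hma).2]
    · rw [numExtensions_succ hm (Nat.zero_le _) (by omega), bottomSeries_eq,
        coeff_succ_one_add_X_mul, if_pos (by omega)]
      push_cast
      simp only [map_add, map_sum, hsum, (ih hm hma).2, (ih hm (show m ≤ a + 1 by omega)).1,
        show a + 1 - m = a - m + 1 by omega]

lemma numExtensions_zero_zero_zero (d : ℕ) : (numExtensions d 0 0 0 : ℤ) = catalan (d + 1) := by
  induction d with
  | zero => simp [numExtensions]
  | succ d ih =>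
    have hC : 𝒞 = 1 + X * (𝒞 + X * topSeries 0) := by
      rw [topSeries]
      linear_combination (X * 𝒞 + 1) * catalanSeriesInt_eq
    have := congrArg (coeff (d + 2)) hC
    rw [coeff_succ_one_add_X_mul, map_add, coeff_succ_X_mul] at this
    rw [numExtensions_succ_zero_zero_zero, Nat.cast_add, ih,
      (numExtensions_eq_coeff d le_rfl le_rfl).1]
    simpa using this.symm

lemma singleton_zero_prefix_of_isAscSeq {l : List ℕ} (h : IsAscSeq l) : [0] <+: l := by
  obtain ⟨hl, h0, -⟩ := h
  obtain _ | ⟨a, t⟩ := l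
  · exact absurd rfl hl
  · obtain rfl : a = 0 := h0
    exact ⟨t, rfl⟩

lemma ncard_ascSeq_avoiding021 {n : ℕ} (hn : 1 ≤ n) :
    {l : List ℕ | l.length = n ∧ IsAscSeq l ∧ ¬ Contains021 l}.ncard = catalan n := by
  have h0 : IsAscSeqAvoiding021 [0] := isAscSeqAvoiding021_singleton.mpr rfl
  have hset : {l : List ℕ | l.length = n ∧ IsAscSeq l ∧ ¬ Contains021 l} =
      extensions (n - 1) [0] := by
    ext x
    simp only [Set.mem_ofPred_eq, Finset.mem_coe, mem_extensions h0, ← isAscSeqAvoiding021_iff,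
      length_singleton]
    exact ⟨fun ⟨hlen, hx⟩ => ⟨hx, by omega, singleton_zero_prefix_of_isAscSeq hx.1⟩,
      fun ⟨hx, hlen, _⟩ => ⟨by omega, hx⟩⟩
  rw [hset, Set.ncard_coe_finset, card_extensions h0, ← Nat.sub_add_cancel hn]
  exact_mod_cast numExtensions_zero_zero_zero (n - 1)

end AscentSequence

open AscentSequence

/-- There is an ascent-preserving bijection between restricted ascent sequences of
length `n` and 021-avoiding ascent sequences of length `n`; consequently the latter are
counted by the Catalan numbers. -/
theorem stmt19 (n : ℕ) (hn : 1 ≤ n) :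
    (∃ e : {l : List ℕ // l.length = n ∧ IsRestrictedAscSeq l} ≃
           {l : List ℕ // l.length = n ∧ IsAscSeq l ∧ ¬ Contains021 l},
      ∀ x, ascList ((e x) : List ℕ) = ascList (x : List ℕ)) ∧
    {l : List ℕ | l.length = n ∧ IsAscSeq l ∧ ¬ Contains021 l}.ncard = catalan n :=
  ⟨⟨restrictedEquivAvoiding021 n, ascList_restrictedEquivAvoiding021⟩, ncard_ascSeq_avoiding021 hn⟩
end
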